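/- arXiv:1109.5330 — 7 statements merged into one kernel-verified Lean document; each statement's English description precedes it below -/
import Mathlib

section
/- An integral domain D is a Prüfer domain if and only if it is integrally closed (in its field of fractions) and quasi-Prüfer. -/
set_option synthInstance.maxHeartbeats 1000000
set_option maxHeartbeats 1000000

open Polynomial

/-- `D` is a quasi-Prüfer domain: for each prime `P` of `D` and each prime `Q` of `D[X]`
with `Q ⊆ P[X]`, one has `Q = (Q ∩ D)[X]`. -/
def IsQuasiPrufer (D : Type*) [CommRing D] : Prop :=
  ∀ P : Ideal D, P.IsPrime → ∀ Q : Ideal D[X], Q.IsPrime →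
    Q ≤ P.map (C : D →+* D[X]) → Q = (Q.comap (C : D →+* D[X])).map (C : D →+* D[X])

/-- `D` is a Prüfer domain: every nonzero finitely generated ideal is invertible
(as a fractional ideal in the fraction field). -/
def IsPruferDom (D : Type*) [CommRing D] [IsDomain D] : Prop :=
  ∀ I : Ideal D, I ≠ ⊥ → I.FG →
    IsUnit (I : FractionalIdeal (nonZeroDivisors D) (FractionRing D))

/-- The valuative dimension of a domain: the supremum of the Krull dimensions of its
valuation overrings. -/
noncomputable def valuativeDim (R : Type*) [CommRing R] [IsDomain R] : WithBot ℕ∞ :=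
  ⨆ (V : Subalgebra R (FractionRing R)) (_ : ValuationRing V), ringKrullDim V

/-- `P₁ ⊊ P₂` are adjacent primes: both prime, `P₁ < P₂`, and no prime strictly between. -/
def AdjacentPrimes {R : Type*} [CommRing R] (P₁ P₂ : Ideal R) : Prop :=
  P₁.IsPrime ∧ P₂.IsPrime ∧ P₁ < P₂ ∧ ∀ Q : Ideal R, Q.IsPrime → P₁ < Q → ¬ Q < P₂

/-- `D` is a strong S-domain: adjacent primes `P₁ ⊊ P₂` extend to adjacent primes
`P₁[X] ⊊ P₂[X]` of `D[X]`. -/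
def IsStrongS (D : Type*) [CommRing D] : Prop :=
  ∀ P₁ P₂ : Ideal D, AdjacentPrimes P₁ P₂ →
    AdjacentPrimes (P₁.map (C : D →+* D[X])) (P₂.map (C : D →+* D[X]))

/-- Transcendence degree: the supremum of cardinalities of algebraically independent
subsets. -/
noncomputable def trdeg (F E : Type*) [CommRing F] [CommRing E] [Algebra F E] : Cardinal :=
  ⨆ s : {s : Set E // AlgebraicIndependent F ((↑) : s → E)}, Cardinal.mk s.1

section Pullback

variable (D : Type*) [CommRing D] [IsDomain D] (T : Subalgebra D (FractionRing D))
  (Q : Ideal T) [Q.IsPrime]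

instance : IsDomain (Localization.AtPrime Q) :=
  IsLocalization.isDomain_localization Q.primeCompl_le_nonZeroDivisors

/-- The copy of the residue field `k(q) = Frac(D/q)` (where `q = Q ∩ D`) inside the residue
field `k(Q) = T_Q/QT_Q`: the subfield generated by the image of `D`. -/
noncomputable def kqSub : Subfield (IsLocalRing.ResidueField (Localization.AtPrime Q)) :=
  Subfield.closure (Set.range ((IsLocalRing.residue (Localization.AtPrime Q)).comp
    ((algebraMap T (Localization.AtPrime Q)).comp (algebraMap D T))))

/-- The pullback ring `D(Q) = D_q + QT_Q`: the preimage of `k(q) ⊆ k(Q)` under the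
canonical surjection `T_Q → k(Q)`. -/
noncomputable def DQ : Subring (Localization.AtPrime Q) :=
  (kqSub D T Q).toSubring.comap (IsLocalRing.residue (Localization.AtPrime Q))

end Pullback


/-!
If `D` is Prüfer and `x ∈ K` is integral, then `D[x]` is a finitely generated fractional ideal
with `D[x] * D[x] = D[x]`, so cancelling the invertible `D[x]` gives `D[x] = D`. For
quasi-Prüfer, let `f ∈ Q ⊆ P[X]` have content `c(f)`. Every `n ∈ c(f)⁻¹` gives a polynomial
`g = n f ∈ D[X]` with `f_k g = g_k f`. If some such `g ∉ Q`, all coefficients of `f` lie in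
`Q`. Otherwise every such `g` lies in `P[X]`, so `c(f) c(f)⁻¹ ⊆ P`, contradicting
`c(f) c(f)⁻¹ = D`.

Conversely, let `u ∈ K` and let `m` be a maximal ideal. The kernel of `D[X] → K, X ↦ u` meets
`D` in `0` but is nonzero, so quasi-Prüfer says it is not contained in `m[X]`. Hence `u` is a
root of a polynomial with a coefficient outside `m`. Over the integrally closed local ring `D_m`
this forces `u ∈ D_m` or `u⁻¹ ∈ D_m` (induct on the degree: with `a` the leading coefficient,
`a u` is integral, hence in `D_m`; if neither `a` nor `a u` is a unit, replace `a Xⁿ` by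
`(a u) Xⁿ⁻¹`). So every `D_m` is a valuation ring, every finitely generated ideal is locally
principal, and locally principal ideals are invertible.
-/

open Polynomial IsLocalization
open scoped nonZeroDivisors

theorem Polynomial.contentIdeal_le_iff {R : Type*} [CommSemiring R] {p : R[X]} {I : Ideal R} :
    p.contentIdeal ≤ I ↔ ∀ n, p.coeff n ∈ I := by
  refine ⟨fun h n => h (p.coeff_mem_contentIdeal n), fun h => Ideal.span_le.mpr fun c hc => ?_⟩
  obtain ⟨n, -, rfl⟩ := mem_coeffs_iff.mp hc
  exact h n

theorem Polynomial.C_coeff_mul_eq_C_coeff_mul {R S : Type*} [CommRing R] [CommRing S]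
    {φ : R →+* S} (hφ : Function.Injective φ) {f g : R[X]} {n : S}
    (h : g.map φ = C n * f.map φ) (k : ℕ) : C (f.coeff k) * g = C (g.coeff k) * f := by
  have hk : φ (g.coeff k) = n * φ (f.coeff k) := by rw [← coeff_map, h, coeff_C_mul, coeff_map]
  apply map_injective φ hφ
  simp only [Polynomial.map_mul, map_C, h, hk, C_mul]
  ring

theorem Ideal.IsPrime.C_coeff_mem_of_map_eq_C_mul_map {R S : Type*} [CommRing R] [CommRing S]
    {φ : R →+* S} (hφ : Function.Injective φ) {Q : Ideal R[X]} (hQ : Q.IsPrime) {f g : R[X]}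
    {n : S} (hf : f ∈ Q) (hg : g.map φ = C n * f.map φ) (hgQ : g ∉ Q) (k : ℕ) :
    C (f.coeff k) ∈ Q := by
  refine (hQ.mem_or_mem ?_).resolve_right hgQ
  rw [C_coeff_mul_eq_C_coeff_mul hφ hg]
  exact Q.mul_mem_left _ hf

theorem Polynomial.spanSingleton_mul_contentIdeal_le {R K : Type*} [CommRing R] [Field K]
    [Algebra R K] [IsFractionRing R K] {f g : R[X]} {n : K}
    (hg : g.map (algebraMap R K) = C n * f.map (algebraMap R K)) :
    FractionalIdeal.spanSingleton R⁰ n * f.contentIdeal ≤ g.contentIdeal := by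
  have hle : f.contentIdeal ≤ Submodule.comap (LinearMap.toSpanSingleton R K n)
      (g.contentIdeal : FractionalIdeal R⁰ K) := by
    refine contentIdeal_le_iff.mpr fun j => ?_
    have hj : algebraMap R K (g.coeff j) = algebraMap R K (f.coeff j) * n := by
      rw [← coeff_map, hg, coeff_C_mul, coeff_map, mul_comm]
    rw [Submodule.mem_comap, LinearMap.toSpanSingleton_apply, Algebra.smul_def, ← hj]
    exact FractionalIdeal.mem_coeIdeal_of_mem _ (g.coeff_mem_contentIdeal j)
  refine FractionalIdeal.spanSingleton_mul_le_iff.mpr fun y hy => ?_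
  obtain ⟨w, hw, rfl⟩ := (FractionalIdeal.mem_coeIdeal _).mp hy
  simpa [Algebra.smul_def, mul_comm] using hle hw

section LocalRing

variable {R K : Type*} [CommRing R] [IsLocalRing R] [IsIntegrallyClosed R]
  [Field K] [Algebra R K] [IsFractionRing R K]

theorem isInteger_or_isInteger_inv_of_aeval_eq_zero {u : K} {f : R[X]} (hf : aeval u f = 0)
    {k : ℕ} (hk : f.coeff k ∉ IsLocalRing.maximalIdeal R) :
    IsInteger R u ∨ IsInteger R u⁻¹ := by
  induction hn : f.natDegree using Nat.strong_induction_on generalizing f k with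
  | _ n ih =>
  obtain ⟨v, hv⟩ := IsIntegrallyClosed.isIntegral_iff.mp (isIntegral_leadingCoeff_smul f u hf)
  rw [Algebra.smul_def] at hv
  by_cases ha : IsUnit f.leadingCoeff
  · refine .inl ⟨↑ha.unit⁻¹ * v, ?_⟩
    rw [map_mul, hv, ← mul_assoc, ← map_mul, ha.val_inv_mul, map_one, one_mul]
  by_cases hvu : IsUnit v
  · refine .inr ⟨f.leadingCoeff * ↑hvu.unit⁻¹, ?_⟩
    have hv0 : algebraMap R K v ≠ 0 := (hvu.map _).ne_zero
    have hu0 : u ≠ 0 := by rintro rfl; simp_all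
    have ha0 : algebraMap R K f.leadingCoeff ≠ 0 := by rintro h; simp_all
    rw [map_mul, map_units_inv, IsUnit.unit_spec, hv]
    field_simp
  have hkn : k < n := by
    refine lt_of_le_of_ne ?_ fun hkn => ?_
    · exact hn ▸ le_natDegree_of_ne_zero fun h => hk (h ▸ zero_mem _)
    · exact hk (by rwa [hkn, ← hn, IsLocalRing.mem_maximalIdeal, mem_nonunits_iff])
  set g := f.eraseLead + C v * X ^ (n - 1)
  have hg : aeval u g = 0 := by
    rw [← f.eraseLead_add_C_mul_X_pow, map_add] at hf
    simp only [g, map_add, map_mul, aeval_C, map_pow, aeval_X] at hf ⊢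
    rw [hv, mul_assoc, ← pow_succ', Nat.sub_add_cancel (by omega), ← hn, hf]
  have hgn : g.natDegree < n := by
    refine (natDegree_add_le _ _).trans_lt (max_lt ?_ ?_)
    · exact f.eraseLead_natDegree_le.trans_lt (by omega)
    · exact (natDegree_C_mul_X_pow_le _ _).trans_lt (by omega)
  have hgk : g.coeff k ∉ IsLocalRing.maximalIdeal R := by
    have hvm : v ∈ IsLocalRing.maximalIdeal R := hvu
    intro hgk
    refine hk ?_
    have : f.coeff k = g.coeff k - (C v * X ^ (n - 1)).coeff k := by
      simp [g, eraseLead_coeff_of_ne _ (hn ▸ hkn.ne)]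
    rw [this, coeff_C_mul_X_pow]
    split_ifs <;> simp [hgk, hvm, sub_mem]
  exact ih _ hgn hg hgk rfl

end LocalRing

section Domain

variable {D : Type*} [CommRing D] [IsDomain D]

section FractionField

variable {K : Type*} [Field K] [Algebra D K] [IsFractionRing D K]

theorem Polynomial.exists_map_eq_C_mul_map_of_mem_inv {f : D[X]} (hf : f ≠ 0) {n : K}
    (hn : n ∈ (f.contentIdeal : FractionalIdeal D⁰ K)⁻¹) :
    ∃ g : D[X], g.map (algebraMap D K) = C n * f.map (algebraMap D K) := by
  have hc : (f.contentIdeal : FractionalIdeal D⁰ K) ≠ 0 :=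
    FractionalIdeal.coeIdeal_ne_zero.mpr (mt (contentIdeal_eq_bot_iff f).mp hf)
  refine mem_lifts _ |>.mp <| (lifts_iff_coeff_lifts _).mpr fun j => ?_
  have := (FractionalIdeal.mem_inv_iff hc).mp hn _
    (FractionalIdeal.mem_coeIdeal_of_mem _ (f.coeff_mem_contentIdeal j))
  simpa [coeff_C_mul] using (FractionalIdeal.mem_one_iff _).mp this

theorem algebraMap_mem_mul_inv_of_forall_mul_mem_span_singleton {I : Ideal D} {a b : D}
    (ha : a ∈ I) (ha0 : a ≠ 0) (h : ∀ w ∈ I, b * w ∈ Ideal.span {a}) :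
    algebraMap D K b ∈ (I : FractionalIdeal D⁰ K) * (I : FractionalIdeal D⁰ K)⁻¹ := by
  have haK : algebraMap D K a ≠ 0 := by simpa using ha0
  have hI : (I : FractionalIdeal D⁰ K) ≠ 0 :=
    FractionalIdeal.coeIdeal_ne_zero.mpr fun hI => ha0 (by simpa [hI] using ha)
  have hinv : algebraMap D K b / algebraMap D K a ∈ (I : FractionalIdeal D⁰ K)⁻¹ := by
    refine (FractionalIdeal.mem_inv_iff hI).mpr fun y hy => ?_
    obtain ⟨w, hw, rfl⟩ := (FractionalIdeal.mem_coeIdeal _).mp hy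
    obtain ⟨r, hr⟩ := Ideal.mem_span_singleton'.mp (h w hw)
    refine (FractionalIdeal.mem_one_iff _).mpr ⟨r, ?_⟩
    rw [div_mul_eq_mul_div, eq_div_iff haK, ← map_mul, ← map_mul, hr]
  rw [show algebraMap D K b = algebraMap D K a * (algebraMap D K b / algebraMap D K a) by
    field_simp]
  exact FractionalIdeal.mul_mem_mul (FractionalIdeal.mem_coeIdeal_of_mem _ ha) hinv

end FractionField

theorem IsPruferDom.isUnit_of_fg (h : IsPruferDom D) {J : FractionalIdeal D⁰ (FractionRing D)}
    (hJ : J ≠ 0) (hfg : (J : Submodule D (FractionRing D)).FG) : IsUnit J := by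
  have := Module.Finite.iff_fg.mpr hfg
  have hnum : J.num.FG := Module.Finite.iff_fg.mp (.equiv J.equivNumOfIsLocalization)
  have := h J.num (by rwa [← Submodule.zero_eq_bot, Ne, FractionalIdeal.num_eq_zero_iff]) hnum
  rw [← FractionalIdeal.den_mul_self_eq_num'] at this
  exact isUnit_of_mul_isUnit_right this

theorem IsPruferDom.isIntegrallyClosed (h : IsPruferDom D) : IsIntegrallyClosed D := by
  rw [isIntegrallyClosed_iff (FractionRing D)]
  intro x hx
  let J : FractionalIdeal D⁰ (FractionRing D) :=
    ⟨Subalgebra.toSubmodule (Algebra.adjoin D {x}),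
      FractionalIdeal.isFractional_of_fg hx.fg_adjoin_singleton⟩
  have hJJ : J * J = J * 1 := by
    rw [mul_one]
    refine FractionalIdeal.coe_ext ?_
    rw [FractionalIdeal.coe_mul]
    exact Subalgebra.isIdempotentElem_toSubmodule _
  have hJ0 : J ≠ 0 := by
    intro h0
    have : (1 : FractionRing D) ∈ J := (Algebra.adjoin D {x}).one_mem
    rw [h0, FractionalIdeal.mem_zero_iff] at this
    exact one_ne_zero this
  have hxJ : x ∈ J := Algebra.subset_adjoin rfl
  rw [(h.isUnit_of_fg hJ0 hx.fg_adjoin_singleton).mul_left_cancel hJJ] at hxJ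
  exact (FractionalIdeal.mem_one_iff _).mp hxJ

theorem IsPruferDom.isQuasiPrufer (h : IsPruferDom D) : IsQuasiPrufer D := by
  intro P hP Q hQ hQP
  refine le_antisymm (fun f hf => ?_) Ideal.map_comap_le
  rw [Ideal.mem_map_C_iff]
  rcases eq_or_ne f 0 with rfl | hf0
  · simp
  set c : FractionalIdeal D⁰ (FractionRing D) := ↑f.contentIdeal
  have hc : c * c⁻¹ = 1 := (FractionalIdeal.mul_inv_cancel_iff_isUnit _).mpr
    (h _ (mt (contentIdeal_eq_bot_iff f).mp hf0) f.contentIdeal_FG)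
  by_contra hfQ
  suffices c * c⁻¹ ≤ (P : FractionalIdeal D⁰ (FractionRing D)) by
    rw [hc, ← FractionalIdeal.coeIdeal_top, FractionalIdeal.coeIdeal_le_coeIdeal] at this
    exact hP.ne_top (top_le_iff.mp this)
  refine FractionalIdeal.mul_le.mpr fun y hy n hn => ?_
  obtain ⟨g, hg⟩ := exists_map_eq_C_mul_map_of_mem_inv hf0 hn
  have hgQ : g ∈ Q := by
    by_contra hgQ
    exact hfQ (hQ.C_coeff_mem_of_map_eq_C_mul_map (IsFractionRing.injective D _) hf hg hgQ)
  have hgP : g.contentIdeal ≤ P := contentIdeal_le_iff.mpr (Ideal.mem_map_C_iff.mp (hQP hgQ))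
  refine (FractionalIdeal.coeIdeal_le_coeIdeal _).mpr hgP (spanSingleton_mul_contentIdeal_le hg ?_)
  rw [mul_comm y n]
  exact FractionalIdeal.mul_mem_mul (FractionalIdeal.mem_spanSingleton_self _ n) hy

theorem IsQuasiPrufer.exists_aeval_eq_zero_notMem_map (h : IsQuasiPrufer D) (m : Ideal D)
    [m.IsPrime] (u : FractionRing D) : ∃ f : D[X], aeval u f = 0 ∧ f ∉ m.map C := by
  set Q := RingHom.ker (aeval (R := D) u)
  have hQ : Q.comap C = ⊥ := by
    ext c
    simp [Q]
  obtain ⟨p, hp0, hp⟩ := (IsLocalization.isAlgebraic (FractionRing D) D⁰).isAlgebraic u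
  by_contra! hle
  have := h m inferInstance Q (RingHom.ker_isPrime _) fun f hf => hle f hf
  rw [hQ, Ideal.map_bot] at this
  exact hp0 (by simpa [this] using (show p ∈ Q from hp))

theorem IsQuasiPrufer.valuationRing_localization [IsIntegrallyClosed D] (h : IsQuasiPrufer D)
    (m : Ideal D) [m.IsPrime] : ValuationRing (Localization.AtPrime m) := by
  have := isIntegrallyClosed_of_isLocalization (Localization.AtPrime m) m.primeCompl
    m.primeCompl_le_nonZeroDivisors
  rw [ValuationRing.iff_isInteger_or_isInteger _ (FractionRing D)]
  intro u
  obtain ⟨f, hf, hfm⟩ := h.exists_aeval_eq_zero_notMem_map m u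
  obtain ⟨k, hk⟩ : ∃ k, f.coeff k ∉ m := by
    simpa [Ideal.mem_map_C_iff] using hfm
  refine isInteger_or_isInteger_inv_of_aeval_eq_zero (f := f.map (algebraMap D _)) (k := k) ?_ ?_
  · rwa [aeval_map_algebraMap]
  · rwa [coeff_map, IsLocalization.AtPrime.to_map_mem_maximal_iff _ m]

theorem exists_mem_forall_mul_mem_span_singleton (m : Ideal D) [m.IsPrime]
    [ValuationRing (Localization.AtPrime m)] {I : Ideal D} (hI : I.FG) :
    ∃ a ∈ I, ∃ b ∉ m, ∀ w ∈ I, b * w ∈ Ideal.span {a} := by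
  classical
  obtain ⟨S, rfl⟩ := hI
  rcases S.eq_empty_or_nonempty with rfl | hS
  · exact ⟨0, zero_mem _, 1, m.primeCompl.one_mem, by simp⟩
  set φ := algebraMap D (Localization.AtPrime m)
  obtain ⟨a, haS, hmax⟩ := S.exists_max_image (fun i => Ideal.span {φ i}) hS
  have hdvd : ∀ i ∈ S, ∃ c, c * φ a = φ i := fun i hi =>
    Ideal.mem_span_singleton'.mp (hmax i hi (Ideal.mem_span_singleton_self _))
  choose! c hc using hdvd
  obtain ⟨⟨b, hb⟩, hbc⟩ := IsLocalization.exist_integer_multiples m.primeCompl S c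
  refine ⟨a, Ideal.subset_span haS, b, hb, fun w hw => ?_⟩
  have hgen : (S : Set D) ⊆ Submodule.comap (LinearMap.mulLeft D b) (Ideal.span {a}) := by
    intro i hi
    obtain ⟨r, hr⟩ := hbc i hi
    refine Ideal.mem_span_singleton'.mpr
      ⟨r, IsLocalization.injective (Localization.AtPrime m) m.primeCompl_le_nonZeroDivisors ?_⟩
    simp only [LinearMap.mulLeft_apply, map_mul, hr, Algebra.smul_def, mul_assoc]
    exact congrArg _ (hc i hi)
  exact Submodule.span_le.mpr hgen hw

theorem IsPruferDom.of_valuationRing_localization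
    (h : ∀ (m : Ideal D) [m.IsMaximal], ValuationRing (Localization.AtPrime m)) :
    IsPruferDom D := by
  intro I hI hfg
  rw [← FractionalIdeal.mul_inv_cancel_iff_isUnit]
  obtain ⟨T, hT⟩ := FractionalIdeal.le_one_iff_exists_coeIdeal.mp
    (FractionalIdeal.mul_one_div_le_one (I := (I : FractionalIdeal D⁰ (FractionRing D))))
  suffices T = ⊤ by rw [FractionalIdeal.inv_eq, ← hT, this, FractionalIdeal.coeIdeal_top]
  by_contra hT1
  obtain ⟨m, _, hTm⟩ := Ideal.exists_le_maximal T hT1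
  have := h m
  obtain ⟨a, ha, b, hb, hab⟩ := exists_mem_forall_mul_mem_span_singleton m hfg
  have ha0 : a ≠ 0 := by
    rintro rfl
    have hb0 : b ≠ 0 := fun h0 => hb (h0 ▸ m.zero_mem)
    exact hI (eq_bot_iff.mpr fun w hw => by simpa [hb0] using hab w hw)
  have hbT := algebraMap_mem_mul_inv_of_forall_mul_mem_span_singleton
    (K := FractionRing D) ha ha0 hab
  rw [FractionalIdeal.inv_eq, ← hT, FractionalIdeal.mem_coeIdeal] at hbT
  obtain ⟨b', hb'T, hb'⟩ := hbT
  exact hb (hTm (IsFractionRing.injective D (FractionRing D) hb' ▸ hb'T))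

end Domain

/-- An integral domain `D` is a Prüfer domain iff it is integrally closed
in its fraction field and quasi-Prüfer. -/
theorem statement_0 (D : Type*) [CommRing D] [IsDomain D] :
    IsPruferDom D ↔ IsIntegrallyClosed D ∧ IsQuasiPrufer D :=
  ⟨fun h => ⟨h.isIntegrallyClosed, h.isQuasiPrufer⟩, fun ⟨_, h⟩ =>
    IsPruferDom.of_valuationRing_localization fun m _ => h.valuationRing_localization m⟩
end

section
/- If D is a quasi-Prüfer domain, then every overring T of D (ring with D ⊆ T ⊆ K, the fraction field of D) is also quasi-Prüfer. -/
set_option synthInstance.maxHeartbeats 1000000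
set_option maxHeartbeats 1000000

open Polynomial

/-! Let `Q ⊆ P[X]` be primes of `T[X]`, `q = Q ∩ T` and `p = q ∩ D`. Applied to `Q ∩ D[X]`,
the quasi-Prüfer property of `D` makes the class of `X` in `T[X]/Q` transcendental over `D/p`.
Applied to the kernel of `D[X] → T, X ↦ t`, it gives every `t ∈ T` a root polynomial outside
`p[X]`, so `T/q` is algebraic over `D/p`. Hence `X` stays transcendental over `T/q`, which
forces `Q = q[X]`. -/

namespace Polynomial

variable {R S : Type*} [CommRing R] [CommRing S] [Algebra R S]

theorem aeval_quotientMk_X (Q : Ideal S[X]) (g : R[X]) :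
    aeval (Ideal.Quotient.mk Q X) g = Ideal.Quotient.mk Q (g.map (algebraMap R S)) := by
  rw [← Ideal.Quotient.mkₐ_eq_mk R, aeval_algHom_apply, ← aeval_map_algebraMap S,
    aeval_X_left_apply]

theorem map_quotientMk_eq_zero_iff {I : Ideal R} {g : R[X]} :
    g.map (Ideal.Quotient.mk I) = 0 ↔ g ∈ I.map C := by
  rw [← coe_mapRingHom, ← RingHom.mem_ker, ker_mapRingHom, Ideal.mk_ker]

end Polynomial

namespace IsQuasiPrufer

variable {D : Type*} [CommRing D]

theorem exists_aeval_eq_zero_notMem_map_C (h : IsQuasiPrufer D) {A : Type*} [CommRing A]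
    [IsDomain A] [Algebra D A] [FaithfulSMul D A] {a : A} (ha : IsAlgebraic D a)
    (p : Ideal D) [p.IsPrime] : ∃ g : D[X], g ∉ p.map C ∧ aeval a g = 0 := by
  by_contra! hroots
  obtain ⟨g, hg0, hga⟩ := ha
  let Q := RingHom.ker (aeval a : D[X] →ₐ[D] A)
  have hQp : Q ≤ p.map C := fun g hg => by_contra fun hgp => hroots g hgp hg
  have hQD : Q.comap C = ⊥ := by
    ext d
    simp [Q]
  have hQ : Q = ⊥ := by simpa [hQD] using h p ‹_› Q (RingHom.ker_isPrime _) hQp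
  exact hg0 (by rwa [← Ideal.mem_bot, ← hQ, RingHom.mem_ker])

theorem isAlgebraic_quotient (h : IsQuasiPrufer D) {T : Type*} [CommRing T] [IsDomain T]
    [Algebra D T] [FaithfulSMul D T] [Algebra.IsAlgebraic D T] (q : Ideal T) [q.IsPrime] :
    Algebra.IsAlgebraic (D ⧸ q.under D) (T ⧸ q) := by
  refine ⟨Ideal.Quotient.mk_surjective.forall.mpr fun t => ?_⟩
  obtain ⟨g, hgq, hgt⟩ :=
    h.exists_aeval_eq_zero_notMem_map_C (Algebra.IsAlgebraic.isAlgebraic t) (q.under D)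
  refine ⟨g.map (algebraMap D (D ⧸ q.under D)), ?_, ?_⟩
  · rwa [Ne, Ideal.Quotient.algebraMap_eq, map_quotientMk_eq_zero_iff]
  · rw [aeval_map_algebraMap, ← Ideal.Quotient.mkₐ_eq_mk D, aeval_algHom_apply, hgt, map_zero]

theorem comap_mapRingHom_eq (h : IsQuasiPrufer D) {T : Type*} [CommRing T] [Algebra D T]
    {P : Ideal T} [P.IsPrime] {Q : Ideal T[X]} [Q.IsPrime] (hQP : Q ≤ P.map C) :
    Q.comap (mapRingHom (algebraMap D T)) = ((Q.under T).under D).map C := by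
  have hle : Q.comap (mapRingHom (algebraMap D T)) ≤ (P.under D).map C := fun g hg =>
    Ideal.mem_map_C_iff.mpr fun n => by simpa using Ideal.mem_map_C_iff.mp (hQP hg) n
  calc Q.comap (mapRingHom (algebraMap D T))
      = ((Q.comap (mapRingHom (algebraMap D T))).comap C).map C :=
        h _ inferInstance _ inferInstance hle
    _ = ((Q.under T).under D).map C := by rw [Ideal.comap_comap, mapRingHom_comp_C]; rfl

end IsQuasiPrufer

theorem Ideal.eq_map_C_under_of_isAlgebraic_quotient {D T : Type*} [CommRing D] [CommRing T]
    [Algebra D T] (Q : Ideal T[X]) [Q.IsPrime]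
    [Algebra.IsAlgebraic (D ⧸ (Q.under T).under D) (T ⧸ Q.under T)]
    (hQ : Q.comap (mapRingHom (algebraMap D T)) ≤ ((Q.under T).under D).map C) :
    Q = (Q.under T).map C := by
  refine le_antisymm (fun f hf => ?_) (Ideal.map_le_iff_le_comap.mpr le_rfl)
  by_contra hfq
  have : IsScalarTower (D ⧸ (Q.under T).under D) (T ⧸ Q.under T) (T[X] ⧸ Q) :=
    IsScalarTower.of_algebraMap_eq (Ideal.Quotient.mk_surjective.forall.mpr fun _ => rfl)
  have hX_alg : IsAlgebraic (T ⧸ Q.under T) (Ideal.Quotient.mk Q X) := by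
    refine ⟨f.map (algebraMap T (T ⧸ Q.under T)), ?_, ?_⟩
    · rwa [Ne, Ideal.Quotient.algebraMap_eq, map_quotientMk_eq_zero_iff]
    · rw [aeval_map_algebraMap, aeval_quotientMk_X, Algebra.algebraMap_self, Polynomial.map_id,
        Ideal.Quotient.eq_zero_iff_mem.mpr hf]
  have hX_tr : Transcendental (D ⧸ (Q.under T).under D) (Ideal.Quotient.mk Q X) := by
    rw [transcendental_iff_injective, injective_iff_map_eq_zero]
    intro g hg
    obtain ⟨g, rfl⟩ := map_surjective (algebraMap D _) Ideal.Quotient.mk_surjective g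
    rw [aeval_map_algebraMap, aeval_quotientMk_X, Ideal.Quotient.eq_zero_iff_mem] at hg
    exact map_quotientMk_eq_zero_iff.mpr (hQ hg)
  exact hX_tr.extendScalars _ hX_alg

theorem IsQuasiPrufer.of_isAlgebraic {D T : Type*} [CommRing D] [CommRing T] [IsDomain T]
    [Algebra D T] [FaithfulSMul D T] [Algebra.IsAlgebraic D T] (h : IsQuasiPrufer D) :
    IsQuasiPrufer T := by
  intro P _ Q _ hQP
  have := h.isAlgebraic_quotient (Q.under T)
  exact Q.eq_map_C_under_of_isAlgebraic_quotient (h.comap_mapRingHom_eq hQP).le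

/-- Every overring of a quasi-Prüfer domain is quasi-Prüfer. -/
theorem statement_1 (D : Type*) [CommRing D] [IsDomain D] (h : IsQuasiPrufer D)
    (T : Subalgebra D (FractionRing D)) : IsQuasiPrufer T := by
  have := IsLocalization.isAlgebraic (FractionRing D) (nonZeroDivisors D)
  have := Algebra.IsAlgebraic.of_injective T.val Subtype.val_injective
  exact h.of_isAlgebraic
end

section
/- If every overring of the quasilocal domain D has the property that the residue field extension induced by every prime in an overring is algebraic over the residue field of the corresponding contraction in D, and D is quasi-Prüfer, then every localization D_P of D at a prime P is quasi-Prüfer. -/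
set_option synthInstance.maxHeartbeats 1000000
set_option maxHeartbeats 1000000

open Polynomial

/-! For a localization `A = S⁻¹R`, the ring `A[X]` is a localization of `R[X]`, so a prime
`Q ⊆ P[X]` of `A[X]` is extended from its contraction `Q₀` to `R[X]`, which lies in `(P ∩ R)[X]`.
Hence `Q₀ = (Q₀ ∩ R)[X]`, and extending back to `A[X]` gives `Q = (Q ∩ A)[X]`. -/

namespace Polynomial

theorem comap_mapRingHom_map_C {R A : Type*} [CommRing R] [CommRing A] (f : R →+* A)
    (I : Ideal A) : (I.map (C : A →+* A[X])).comap (mapRingHom f) = (I.comap f).map C := by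
  ext g
  simp only [Ideal.mem_comap, Ideal.mem_map_C_iff, coe_mapRingHom, coeff_map]

attribute [local instance] Polynomial.algebra Polynomial.isLocalization in
theorem map_comap_mapRingHom_of_isLocalization {R A : Type*} [CommRing R] [CommRing A]
    [Algebra R A] (S : Submonoid R) [IsLocalization S A] (J : Ideal A[X]) :
    (J.comap (mapRingHom (algebraMap R A))).map (mapRingHom (algebraMap R A)) = J :=
  IsLocalization.map_under (S.map C) A[X] J

end Polynomial

theorem IsQuasiPrufer.of_isLocalization {R A : Type*} [CommRing R] [CommRing A] [Algebra R A]
    (S : Submonoid R) [IsLocalization S A] (hR : IsQuasiPrufer R) : IsQuasiPrufer A := by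
  intro P hP Q hQ hQP
  set f := algebraMap R A
  set φ := mapRingHom f
  have hφC : φ.comp C = C.comp f := mapRingHom_comp_C f
  have hQ₀ : Q.comap φ ≤ (P.comap f).map C :=
    (Ideal.comap_mono hQP).trans_eq (comap_mapRingHom_map_C f P)
  have hQ₀_extended := hR _ (hP.comap f) _ (hQ.comap φ) hQ₀
  refine le_antisymm ?_ Ideal.map_comap_le
  calc Q = (Q.comap φ).map φ := (map_comap_mapRingHom_of_isLocalization S Q).symm
    _ = (((Q.comap φ).comap C).map C).map φ := by rw [← hQ₀_extended]
    _ = (((Q.comap C).comap f).map f).map C := by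
      rw [Ideal.map_map, hφC, ← Ideal.map_map, Ideal.comap_comap, hφC, ← Ideal.comap_comap]
    _ ≤ (Q.comap C).map C := Ideal.map_mono Ideal.map_comap_le

theorem statement_3_general (D : Type*) [CommRing D]
    (hqp : IsQuasiPrufer D) (P : Ideal D) [P.IsPrime] :
    IsQuasiPrufer (Localization.AtPrime P) :=
  hqp.of_isLocalization P.primeCompl

/-- If every overring of the quasilocal domain `D` has algebraic residue field
extensions over the contractions to `D`, and `D` is quasi-Prüfer, then every localization
`D_P` at a prime `P` is quasi-Prüfer. -/
theorem statement_3 (D : Type*) [CommRing D] [IsDomain D] [IsLocalRing D]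
    (hres : ∀ T : Subalgebra D (FractionRing D), ∀ Q : Ideal T, Q.IsPrime →
      ∀ x : ↥T ⧸ Q, ∃ p : Polynomial (D ⧸ Q.comap (algebraMap D ↥T)), p ≠ 0 ∧
        Polynomial.eval₂ (Ideal.quotientMap Q (algebraMap D ↥T) le_rfl) x p = 0)
    (hqp : IsQuasiPrufer D) (P : Ideal D) [P.IsPrime] :
    IsQuasiPrufer (Localization.AtPrime P) :=
  statement_3_general D hqp P
end

section
/- If D is a strong S-domain of finite Krull dimension, then dim(D[X]) = dim(D) + 1. -/
set_option synthInstance.maxHeartbeats 1000000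
set_option maxHeartbeats 1000000

open Polynomial

/-! The fiber of `Spec R[X] → Spec R` over `p` is `Spec κ(p)[X]`, of dimension one, and `p[X]`
is its least point; so a prime `Q` over `p` is either `p[X]` or sits just above it, and
`ht Q ≤ ht p + [Q ≠ p[X]]`. This bound is proved by checking that the right-hand side is strictly
monotone in `Q`. The only delicate case is `p'[X] ⊊ Q' ⊊ p[X]`: then `p' ⊊ p` cannot be adjacent,
by the strong S-property, and a prime strictly between them supplies the missing unit of height.
The reverse inequality `dim R + 1 ≤ dim R[X]` holds for every ring. -/

open Order

namespace PrimeSpectrum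

variable {R : Type*} [CommRing R]

noncomputable def mapC (p : PrimeSpectrum R) : PrimeSpectrum R[X] :=
  ⟨p.asIdeal.map C, have := p.isPrime; Ideal.isPrime_map_C_of_isPrime⟩

lemma mapC_le_iff {p : PrimeSpectrum R} {Q : PrimeSpectrum R[X]} :
    mapC p ≤ Q ↔ p ≤ comap C Q :=
  Ideal.map_le_iff_le_comap

lemma comap_C_mapC (p : PrimeSpectrum R) : comap C (mapC p) = p := by
  ext x
  exact (Ideal.mem_map_C_iff (I := p.asIdeal) (f := C x)).trans ⟨fun h => by simpa using h 0,
    fun h n => by rw [coeff_C]; split_ifs <;> simp [h]⟩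

lemma krullDim_preimage_comap_C_le_one (p : PrimeSpectrum R) :
    krullDim (comap (C : R →+* R[X]) ⁻¹' {p}) ≤ 1 := by
  rw [show C = algebraMap R R[X] from rfl,
    krullDim_eq_of_orderIso (preimageOrderIsoFiber R R[X] p), ← ringKrullDim,
    ← ringKrullDim_eq_of_ringEquiv (polyEquivTensor R p.asIdeal.ResidueField).toRingEquiv]
  simp

lemma eq_mapC_of_lt_of_comap_C_eq {p : PrimeSpectrum R} {Q' Q : PrimeSpectrum R[X]}
    (hlt : Q' < Q) (hQ' : comap C Q' = p) (hQ : comap C Q = p) : Q' = mapC p := by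
  have hmin := ((krullDim_le_one_iff.mp (krullDim_preimage_comap_C_le_one p))
    ⟨Q', hQ'⟩).resolve_right (not_isMax_iff.mpr ⟨⟨Q, hQ⟩, hlt⟩)
  have hle : (⟨mapC p, comap_C_mapC p⟩ : comap C ⁻¹' {p}) ≤ ⟨Q', hQ'⟩ :=
    mapC_le_iff.mpr hQ'.ge
  exact congrArg Subtype.val (hmin.eq_of_le hle).symm

open Classical in
noncomputable def heightBound (Q : PrimeSpectrum R[X]) : ℕ∞ :=
  height (comap C Q) + if Q = mapC (comap C Q) then 0 else 1

end PrimeSpectrum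

namespace IsStrongS

open PrimeSpectrum

variable {R : Type*} [CommRing R]

lemma exists_between_of_mapC_lt_lt_mapC (hS : IsStrongS R) {p' p : PrimeSpectrum R}
    {Q : PrimeSpectrum R[X]} (h₁ : mapC p' < Q) (h₂ : Q < mapC p) :
    ∃ q, p' < q ∧ q < p := by
  have hlt : p' < p := by
    refine lt_of_le_of_ne ?_ ?_
    · simpa only [comap_C_mapC] using mapC_le_iff.mp (h₁.trans h₂).le
    · rintro rfl
      exact (h₁.trans h₂).ne rfl
  by_contra! hno
  obtain ⟨-, -, -, hadj⟩ :=
    hS _ _ ⟨p'.isPrime, p.isPrime, hlt, fun q hq h₁ h₂ => hno ⟨q, hq⟩ h₁ h₂⟩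
  exact hadj Q.asIdeal Q.isPrime h₁ h₂

lemma strictMono_heightBound (hS : IsStrongS R) (hfin : ∀ p : PrimeSpectrum R, height p ≠ ⊤) :
    StrictMono (heightBound (R := R)) := by
  intro Q' Q hlt
  set p' := comap C Q' with hp'
  set p := comap C Q with hp
  have hfin' : height p' < ⊤ := lt_top_iff_ne_top.mpr (hfin p')
  rcases (show p' ≤ p from Ideal.comap_mono hlt.le).eq_or_lt with heq | hp'p
  · have hQ' : Q' = mapC p := eq_mapC_of_lt_of_comap_C_eq hlt heq rfl
    have hQ : Q ≠ mapC p := (hQ' ▸ hlt).ne'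
    calc heightBound Q' = height p := by simp [heightBound, hQ', comap_C_mapC]
      _ < height p + 1 := (ENat.lt_add_one_iff (hfin p)).mpr le_rfl
      _ = heightBound Q := by simp [heightBound, ← hp, hQ]
  by_cases hQ'e : Q' = mapC p'
  · calc heightBound Q' = height p' := by simp [heightBound, ← hp', ← hQ'e]
      _ < height p := height_strictMono hp'p hfin'
      _ ≤ heightBound Q := le_self_add
  by_cases hQe : Q = mapC p
  · obtain ⟨q, h₁, h₂⟩ := hS.exists_between_of_mapC_lt_lt_mapC
      (lt_of_le_of_ne (mapC_le_iff.mpr le_rfl) (Ne.symm hQ'e)) (hQe ▸ hlt)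
    calc heightBound Q' = height p' + 1 := by simp [heightBound, ← hp', hQ'e]
      _ ≤ height q := add_one_le_of_lt (height_strictMono h₁ hfin')
      _ < height p := height_strictMono h₂ (lt_top_iff_ne_top.mpr (hfin q))
      _ = heightBound Q := by simp [heightBound, ← hp, ← hQe]
  · calc heightBound Q' = height p' + 1 := by simp [heightBound, ← hp', hQ'e]
      _ < height p + 1 :=
        (ENat.add_lt_add_iff_right ENat.one_ne_top).mpr (height_strictMono hp'p hfin')
      _ = heightBound Q := by simp [heightBound, ← hp, hQe]

lemma height_le_height_comap_C_add_one (hS : IsStrongS R)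
    (hfin : ∀ p : PrimeSpectrum R, height p ≠ ⊤) (Q : PrimeSpectrum R[X]) :
    height Q ≤ height (comap C Q) + 1 :=
  calc height Q ≤ heightBound Q := by
        simpa using height_le_height_apply_of_strictMono _ (hS.strictMono_heightBound hfin) Q
    _ ≤ height (comap C Q) + 1 := by unfold heightBound; gcongr; split_ifs <;> simp

end IsStrongS

theorem statement_5_general (D : Type*) [CommRing D] (h : IsStrongS D)
    (hfin : ringKrullDim D < ⊤) : ringKrullDim D[X] = ringKrullDim D + 1 := by
  have hfinp (p : PrimeSpectrum D) : height p ≠ ⊤ := fun hp => by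
    simpa [hp] using (height_le_krullDim p).trans_lt hfin
  refine le_antisymm ?_ ringKrullDim_succ_le_ringKrullDim_polynomial
  rw [ringKrullDim, krullDim_eq_iSup_height]
  refine iSup_le fun Q => ?_
  calc (height Q : WithBot ℕ∞) ≤ ↑(height (PrimeSpectrum.comap C Q) + 1) := by
        exact_mod_cast h.height_le_height_comap_C_add_one hfinp Q
    _ ≤ ringKrullDim D + 1 := by push_cast; gcongr; exact height_le_krullDim _

/-- If `D` is a strong S-domain of finite Krull dimension, then
`dim D[X] = dim D + 1`. -/
theorem statement_5 (D : Type*) [CommRing D] [IsDomain D] (h : IsStrongS D)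
    (hfin : ringKrullDim D < ⊤) : ringKrullDim D[X] = ringKrullDim D + 1 :=
  statement_5_general D h hfin
end

section
/- Let D be a domain, T an overring, Q a prime ideal of T, q = Q ∩ D, and let D(Q) := D_q + QT_Q be the pullback of the canonical embedding k(q) → k(Q) along the surjection T_Q → k(Q). Then dim(D(Q)) = dim(T_Q). -/
set_option synthInstance.maxHeartbeats 1000000
set_option maxHeartbeats 1000000

open Polynomial

/-!
Let `A` be a subring of a local ring `(B, 𝔪)` with `𝔪 ⊆ A` and `A ∩ Bˣ = Aˣ`; `D(Q) ⊆ T_Q` is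
such a ring, being the preimage of a subfield of the residue field. Then `P ↦ P ∩ A` is an order
isomorphism `Spec B ≃ Spec A`. It reflects inclusions: if `P₁ ∩ A ⊆ P₂ ∩ A` and `𝔪 ⊄ P₂`, any
`s ∈ 𝔪 \ P₂` gives `s P₁ ⊆ P₁ ∩ A ⊆ P₂`, so `P₁ ⊆ P₂`. It is onto: a prime `p` of `A` containing
`𝔪` is `𝔪` itself, since `A \ 𝔪 ⊆ Aˣ`, and for `s ∈ 𝔪 \ p` the ideal `{b ∈ B | s b ∈ p}` is a
prime of `B` lying over `p`.
-/

open IsLocalRing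

namespace Subring

variable {B : Type*} [CommRing B] [IsLocalRing B] {A : Subring B}

theorem mul_mem_of_mem_maximalIdeal (hM : (maximalIdeal B : Set B) ⊆ A) {s : B}
    (hs : s ∈ maximalIdeal B) (b : B) : s * b ∈ A :=
  hM (Ideal.mul_mem_right b _ hs)

section colon

variable (hM : (maximalIdeal B : Set B) ⊆ A) {p : Ideal A} [hp : p.IsPrime] {s : A}
  (hsM : (s : B) ∈ maximalIdeal B) (hsp : s ∉ p)

def primeColon : Ideal B where
  carrier := {b | ∃ a ∈ p, (a : B) = s * b}
  zero_mem' := ⟨0, p.zero_mem, by simp⟩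
  add_mem' := by
    rintro x y ⟨a, ha, hax⟩ ⟨b, hb, hby⟩
    exact ⟨a + b, p.add_mem ha hb, by simp [hax, hby, mul_add]⟩
  smul_mem' c b := by
    rintro ⟨a, ha, hab⟩
    let t : A := ⟨s * c, mul_mem_of_mem_maximalIdeal hM hsM c⟩
    let u : A := ⟨s * (c * b), mul_mem_of_mem_maximalIdeal hM hsM _⟩
    have hsu : s * u ∈ p := by
      have : s * u = t * a := Subtype.ext (by simp [t, u, hab]; ring)
      exact this ▸ p.mul_mem_left t ha
    exact ⟨u, (hp.mem_or_mem hsu).resolve_left hsp, rfl⟩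

theorem primeColon_isPrime : (primeColon hM hsM hsp).IsPrime where
  ne_top' h := by
    obtain ⟨a, ha, has⟩ : (1 : B) ∈ primeColon hM hsM hsp := h ▸ Submodule.mem_top
    exact hsp (Subtype.ext (by simpa using has : (a : B) = s) ▸ ha)
  mem_or_mem' {x y} := by
    rintro ⟨a, ha, haxy⟩
    let sx : A := ⟨s * x, mul_mem_of_mem_maximalIdeal hM hsM x⟩
    let sy : A := ⟨s * y, mul_mem_of_mem_maximalIdeal hM hsM y⟩
    have : sx * sy ∈ p := by
      have : sx * sy = s * a := Subtype.ext (by simp [sx, sy, haxy]; ring)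
      exact this ▸ p.mul_mem_left s ha
    exact (hp.mem_or_mem this).imp (fun h => ⟨sx, h, rfl⟩) (fun h => ⟨sy, h, rfl⟩)

theorem comap_primeColon : (primeColon hM hsM hsp).comap A.subtype = p := by
  ext a
  refine ⟨fun ⟨a', ha', hsa⟩ => ?_, fun ha => ⟨s * a, p.mul_mem_left s ha, rfl⟩⟩
  rw [show a' = s * a from Subtype.ext hsa] at ha'
  exact (hp.mem_or_mem ha').resolve_left hsp

end colon

theorem exists_isPrime_comap_subtype_eq (hM : (maximalIdeal B : Set B) ⊆ A)
    [IsLocalHom A.subtype] (p : Ideal A) [hp : p.IsPrime] :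
    ∃ P : Ideal B, P.IsPrime ∧ P.comap A.subtype = p := by
  by_cases h : ∃ s : A, (s : B) ∈ maximalIdeal B ∧ s ∉ p
  · obtain ⟨s, hsM, hsp⟩ := h
    exact ⟨primeColon hM hsM hsp, primeColon_isPrime hM hsM hsp, comap_primeColon hM hsM hsp⟩
  · push Not at h
    refine ⟨maximalIdeal B, inferInstance, le_antisymm h fun a ha => ?_⟩
    by_contra haM
    exact hp.ne_top (Ideal.eq_top_of_isUnit_mem _ ha (IsUnit.of_map A.subtype a
      (notMem_maximalIdeal.mp haM)))

theorem le_of_comap_subtype_le (hM : (maximalIdeal B : Set B) ⊆ A) {P₁ P₂ : Ideal B}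
    [hP₂ : P₂.IsPrime] (hP₁ : P₁ ≠ ⊤)
    (h : P₁.comap A.subtype ≤ P₂.comap A.subtype) : P₁ ≤ P₂ := by
  by_cases hle : maximalIdeal B ≤ P₂
  · exact (le_maximalIdeal hP₁).trans hle
  · obtain ⟨s, hsM, hsP⟩ := SetLike.not_le_iff_exists.mp hle
    intro b hb
    have : s * b ∈ P₂ :=
      h (x := ⟨s * b, mul_mem_of_mem_maximalIdeal hM hsM b⟩) (P₁.mul_mem_left s hb)
    exact (hP₂.mem_or_mem this).resolve_left hsP

noncomputable def primeSpectrumOrderIso (hM : (maximalIdeal B : Set B) ⊆ A)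
    [IsLocalHom A.subtype] : PrimeSpectrum B ≃o PrimeSpectrum A :=
  OrderIso.ofSurjective
    (OrderEmbedding.ofMapLEIff (PrimeSpectrum.comap A.subtype) fun P₁ P₂ =>
      ⟨le_of_comap_subtype_le hM P₁.isPrime.ne_top, fun h => Ideal.comap_mono h⟩)
    fun p => by
      obtain ⟨P, hP, hPp⟩ := exists_isPrime_comap_subtype_eq hM p.asIdeal
      exact ⟨⟨P, hP⟩, PrimeSpectrum.ext hPp⟩

theorem ringKrullDim_eq_of_maximalIdeal_subset (hM : (maximalIdeal B : Set B) ⊆ A)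
    [IsLocalHom A.subtype] : ringKrullDim A = ringKrullDim B :=
  (Order.krullDim_eq_of_orderIso (primeSpectrumOrderIso hM)).symm

theorem maximalIdeal_subset_comap_residue (k : Subfield (ResidueField B)) :
    (maximalIdeal B : Set B) ⊆ k.toSubring.comap (residue B) := fun x hx => by
  show residue B x ∈ k
  rw [(residue_eq_zero_iff x).mpr hx]
  exact zero_mem k

instance isLocalHom_subtype_comap_residue (k : Subfield (ResidueField B)) :
    IsLocalHom (k.toSubring.comap (residue B)).subtype where
  map_nonunit a ha := by
    have hinv : residue B ↑ha.unit⁻¹ = (residue B a)⁻¹ := eq_inv_of_mul_eq_one_left <| by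
      rw [← map_mul]
      exact (congrArg (residue B) ha.unit.inv_mul).trans (map_one _)
    have hinv_mem : (↑ha.unit⁻¹ : B) ∈ k.toSubring.comap (residue B) := by
      show residue B _ ∈ k
      exact hinv ▸ inv_mem a.2
    exact IsUnit.of_mul_eq_one ⟨_, hinv_mem⟩ (Subtype.ext ha.unit.mul_inv)

theorem ringKrullDim_comap_residue (k : Subfield (ResidueField B)) :
    ringKrullDim (k.toSubring.comap (residue B)) = ringKrullDim B :=
  ringKrullDim_eq_of_maximalIdeal_subset (maximalIdeal_subset_comap_residue k)

end Subring

/-- For the pullback `D(Q) = D_q + QT_Q`, one has `dim D(Q) = dim T_Q`. -/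
theorem statement_6 (D : Type*) [CommRing D] [IsDomain D]
    (T : Subalgebra D (FractionRing D)) (Q : Ideal T) [Q.IsPrime] :
    ringKrullDim (DQ D T Q) = ringKrullDim (Localization.AtPrime Q) :=
  Subring.ringKrullDim_comap_residue (kqSub D T Q)
end

section
/- For any domain D, if D_P is a strong S-domain for every prime ideal P of D, then D is a strong S-domain. -/
set_option synthInstance.maxHeartbeats 1000000
set_option maxHeartbeats 1000000

open Polynomial

section Aux

variable {R S : Type*} [CommRing R] [CommRing S] [Algebra R S] (M : Submonoid R)
  [IsLocalization M S]

/-- `map` is strictly monotone on primes disjoint from `M`. -/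
lemma aux_map_lt_map {p q : Ideal R} (hp : p.IsPrime) (hq : q.IsPrime)
    (dp : Disjoint (M : Set R) ↑p) (dq : Disjoint (M : Set R) ↑q) (hlt : p < q) :
    p.map (algebraMap R S) < q.map (algebraMap R S) := by
  refine lt_of_le_of_ne (Ideal.map_mono hlt.le) fun e => hlt.ne ?_
  have := congrArg (Ideal.comap (algebraMap R S)) e
  rwa [(show Ideal.comap (algebraMap R S) (p.map (algebraMap R S)) = p from IsLocalization.under_map_of_isPrime_disjoint M S hp dp),
    (show Ideal.comap (algebraMap R S) (q.map (algebraMap R S)) = q from IsLocalization.under_map_of_isPrime_disjoint M S hq dq)] at this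

/-- Adjacency of primes disjoint from `M` is preserved by localization. -/
lemma aux_adjacent_map {p q : Ideal R} (dp : Disjoint (M : Set R) ↑p)
    (dq : Disjoint (M : Set R) ↑q) (hadj : AdjacentPrimes p q) :
    AdjacentPrimes (p.map (algebraMap R S)) (q.map (algebraMap R S)) := by
  obtain ⟨hp, hq, hlt, hmid⟩ := hadj
  refine ⟨IsLocalization.isPrime_of_isPrime_disjoint M S p hp dp,
    IsLocalization.isPrime_of_isPrime_disjoint M S q hq dq,
    aux_map_lt_map M hp hq dp dq hlt, fun Q hQ h1 h2 => ?_⟩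
  have hcp : Q.comap (algebraMap R S) |>.IsPrime := hQ.comap _
  have h1' : p < Q.comap (algebraMap R S) := by
    refine lt_of_le_of_ne ?_ fun e => h1.ne ?_
    · rw [← (IsLocalization.under_map_of_isPrime_disjoint M S hp dp : Ideal.comap (algebraMap R S) (p.map (algebraMap R S)) = p)]
      exact Ideal.comap_mono h1.le
    · rw [e, IsLocalization.map_comap M S Q]
  have h2' : Q.comap (algebraMap R S) < q := by
    refine lt_of_le_of_ne ?_ fun e => h2.ne ?_
    · rw [← (IsLocalization.under_map_of_isPrime_disjoint M S hq dq : Ideal.comap (algebraMap R S) (q.map (algebraMap R S)) = q)]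
      exact Ideal.comap_mono h2.le
    · rw [← e, IsLocalization.map_comap M S Q]
  exact hmid _ hcp h1' h2'

/-- `S[X]` is the localization of `R[X]` at `M.map C`, when `R → S` is injective. -/
lemma aux_isLocalization_poly (hinj : Function.Injective (algebraMap R S)) :
    @IsLocalization R[X] _ (M.map (C : R →+* R[X])) S[X] _
      (Polynomial.mapRingHom (algebraMap R S)).toAlgebra := by
  letI : Algebra R[X] S[X] := (Polynomial.mapRingHom (algebraMap R S)).toAlgebra
  have halg : (algebraMap R[X] S[X]) = Polynomial.mapRingHom (algebraMap R S) := rfl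
  classical
  refine ⟨⟨?_, ?_, ?_⟩⟩
  · rintro ⟨y, hy⟩
    obtain ⟨s, hs, rfl⟩ := hy
    have : (algebraMap R[X] S[X]) (C s) = C (algebraMap R S s) := by
      rw [halg]; simp
    rw [this]
    exact (IsLocalization.map_units S ⟨s, hs⟩).map (C : S →+* S[X])
  · intro z
    obtain ⟨b, hb⟩ := IsLocalization.exist_integer_multiples_of_finset M
      (z.support.image z.coeff)
    have hcoeff : ∀ n : ℕ, (z * C (algebraMap R S b)).coeff n ∈
        Set.range (algebraMap R S) := by
      intro n
      rw [coeff_mul_C]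
      by_cases hn : z.coeff n = 0
      · exact ⟨0, by simp [hn]⟩
      · obtain ⟨r, hr⟩ := hb (z.coeff n)
          (Finset.mem_image_of_mem _ (Polynomial.mem_support_iff.mpr hn))
        exact ⟨r, by rwa [Algebra.smul_def, mul_comm] at hr⟩
    obtain ⟨q, hq⟩ := (Polynomial.mem_lifts _).mp
      ((Polynomial.lifts_iff_coeff_lifts _).mpr hcoeff)
    refine ⟨⟨q, ⟨C (b : R), Submonoid.mem_map_of_mem _ b.2⟩⟩, ?_⟩
    have : (algebraMap R[X] S[X]) (C (b : R)) = C (algebraMap R S b) := by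
      rw [halg]; simp
    rw [this, halg]
    exact hq.symm
  · intro x y hxy
    have : Polynomial.map (algebraMap R S) x = Polynomial.map (algebraMap R S) y := hxy
    refine ⟨1, ?_⟩
    rw [Polynomial.map_injective _ hinj this]

end Aux

/-- If `D_P` is a strong S-domain for every prime `P` of `D`, then `D` is a
strong S-domain. -/
theorem statement_15 (D : Type*) [CommRing D] [IsDomain D]
    (h : ∀ (P : Ideal D) [P.IsPrime], IsStrongS (Localization.AtPrime P)) :
    IsStrongS D := by
  intro P₁ P₂ hadj
  obtain ⟨h1, h2, hlt, hmid⟩ := hadj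
  haveI := h1; haveI := h2
  set A := Localization.AtPrime P₂ with hA
  set M := P₂.primeCompl with hM
  have d2 : Disjoint (M : Set D) ↑P₂ := Set.disjoint_left.mpr fun x hx hx2 => hx hx2
  have d1 : Disjoint (M : Set D) ↑P₁ :=
    Set.disjoint_left.mpr fun x hx hx1 => hx (hlt.le hx1)
  have adjA : AdjacentPrimes (P₁.map (algebraMap D A)) (P₂.map (algebraMap D A)) :=
    aux_adjacent_map M d1 d2 ⟨h1, h2, hlt, hmid⟩
  have adjAX := h P₂ _ _ adjA
  -- prime-ness and strict inclusion of extensions to D[X]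
  have hp1X : (P₁.map (C : D →+* D[X])).IsPrime := Ideal.isPrime_map_C_of_isPrime
  have hp2X : (P₂.map (C : D →+* D[X])).IsPrime := Ideal.isPrime_map_C_of_isPrime
  have memC : ∀ (I : Ideal D) (x : D), (C x : D[X]) ∈ I.map (C : D →+* D[X]) ↔ x ∈ I := by
    intro I x
    constructor
    · intro hx
      have := (Ideal.mem_map_C_iff.mp hx) 0
      simpa using this
    · exact fun hx => Ideal.mem_map_of_mem _ hx
  have hltX : P₁.map (C : D →+* D[X]) < P₂.map (C : D →+* D[X]) := by
    obtain ⟨x, hx2, hx1⟩ := SetLike.exists_of_lt hlt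
    refine lt_of_le_of_ne (Ideal.map_mono hlt.le) fun e => hx1 ?_
    exact (memC P₁ x).mp (e ▸ (memC P₂ x).mpr hx2)
  refine ⟨hp1X, hp2X, hltX, fun Q hQ hq1 hq2 => ?_⟩
  -- set up the localization D[X] → A[X]
  letI : Algebra D[X] A[X] := (Polynomial.mapRingHom (algebraMap D A)).toAlgebra
  have hinj : Function.Injective (algebraMap D A) :=
    IsLocalization.injective A P₂.primeCompl_le_nonZeroDivisors
  haveI : IsLocalization (M.map (C : D →+* D[X])) A[X] := aux_isLocalization_poly M hinj
  -- disjointness of the three primes of D[X] from M.map C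
  have disjOf : ∀ (I : Ideal D[X]), I ≤ P₂.map (C : D →+* D[X]) →
      Disjoint ((M.map (C : D →+* D[X])) : Set D[X]) ↑I := by
    intro I hI
    refine Set.disjoint_left.mpr ?_
    rintro y ⟨s, hs, rfl⟩ hyI
    exact hs ((memC P₂ s).mp (hI hyI))
  have dQ : Disjoint ((M.map (C : D →+* D[X])) : Set D[X]) ↑Q := disjOf Q hq2.le
  have dP1X : Disjoint ((M.map (C : D →+* D[X])) : Set D[X]) ↑(P₁.map (C : D →+* D[X])) :=
    disjOf _ hltX.le
  have dP2X : Disjoint ((M.map (C : D →+* D[X])) : Set D[X]) ↑(P₂.map (C : D →+* D[X])) :=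
    disjOf _ le_rfl
  -- the extensions to A[X] commute
  have hcomm : ∀ I : Ideal D,
      (I.map (C : D →+* D[X])).map (algebraMap D[X] A[X]) =
        (I.map (algebraMap D A)).map (C : A →+* A[X]) := by
    intro I
    rw [Ideal.map_map, Ideal.map_map]
    congr 1
    ext x
    simp [RingHom.algebraMap_toAlgebra]
  -- transfer the strict chain to A[X]
  have lt1 : (P₁.map (C : D →+* D[X])).map (algebraMap D[X] A[X]) <
      Q.map (algebraMap D[X] A[X]) :=
    aux_map_lt_map (M.map (C : D →+* D[X])) hp1X hQ dP1X dQ hq1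
  have lt2 : Q.map (algebraMap D[X] A[X]) <
      (P₂.map (C : D →+* D[X])).map (algebraMap D[X] A[X]) :=
    aux_map_lt_map (M.map (C : D →+* D[X])) hQ hp2X dQ dP2X hq2
  have hQ' : (Q.map (algebraMap D[X] A[X])).IsPrime :=
    IsLocalization.isPrime_of_isPrime_disjoint (M.map (C : D →+* D[X])) A[X] Q hQ dQ
  rw [hcomm] at lt1 lt2
  exact adjAX.2.2.2 _ hQ' lt1 lt2
end

section
/- Let D be a domain with fraction field K and let T be an overring. For any prime Q of T and q = Q ∩ D, the residue field k(Q) = T_Q/QT_Q naturally contains (an isomorphic copy of) a field extension of k(q) = Frac(D/q); if D is quasi-Prüfer, this extension is algebraic. -/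
open Polynomial

/-! If the image of `t ∈ T` in `T/Q` were transcendental over `D/q`, the kernel of
`D[X] → T, X ↦ t` would be a prime of `D[X]` contained in `q[X]` and meeting `D` in `0`, so the
quasi-Prüfer property forces it to vanish; but writing `t = c/b` puts `bX - c` in it. Hence
`T/Q` is algebraic over `D/q`, and algebraicity passes to the fraction fields. -/

section QuasiPrufer

variable {R A : Type*} [CommRing R] [CommRing A] [Algebra R A]

theorem ker_aeval_le_map_C_of_transcendental (P : Ideal A) (a : A)
    (h : Transcendental (R ⧸ P.comap (algebraMap R A)) (Ideal.Quotient.mk P a)) :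
    RingHom.ker (aeval a) ≤ (P.comap (algebraMap R A)).map C := by
  intro p hp
  rw [← Ideal.mk_ker (I := P.comap (algebraMap R A)), ← Polynomial.ker_mapRingHom]
  by_contra hne
  refine h ⟨p.map (algebraMap R _), hne, ?_⟩
  rw [aeval_map_algebraMap, ← Ideal.Quotient.mkₐ_eq_mk R, aeval_algHom_apply,
    RingHom.mem_ker.mp hp, map_zero]

variable [IsDomain A] (P : Ideal A) [P.IsPrime]

theorem IsQuasiPrufer.isAlgebraic_quotient_mk (hR : IsQuasiPrufer R)
    (hinj : Function.Injective (algebraMap R A)) {a : A} {b c : R} (hb : b ≠ 0)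
    (hab : algebraMap R A b * a = algebraMap R A c) :
    IsAlgebraic (R ⧸ P.comap (algebraMap R A)) (Ideal.Quotient.mk P a) := by
  by_contra h
  have hker : RingHom.ker (aeval (R := R) a) = ⊥ := by
    have hcomap : (RingHom.ker (aeval (R := R) a)).comap C = ⊥ := by
      ext r
      simp [map_eq_zero_iff _ hinj]
    rw [hR _ inferInstance _ (RingHom.ker_isPrime _) (ker_aeval_le_map_C_of_transcendental P a h),
      hcomap, Ideal.map_bot]
  have hmem : C b * X - C c ∈ RingHom.ker (aeval (R := R) a) := by
    simp [hab]
  rw [hker, Ideal.mem_bot] at hmem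
  exact hb (by simpa using congrArg (coeff · 1) hmem)

theorem IsQuasiPrufer.isAlgebraic_quotient_s19 (hR : IsQuasiPrufer R)
    (hinj : Function.Injective (algebraMap R A))
    (hfrac : ∀ a : A, ∃ b c : R, b ≠ 0 ∧ algebraMap R A b * a = algebraMap R A c) :
    Algebra.IsAlgebraic (R ⧸ P.comap (algebraMap R A)) (A ⧸ P) where
  isAlgebraic y := by
    obtain ⟨a, rfl⟩ := Ideal.Quotient.mk_surjective y
    obtain ⟨b, c, hb, hbc⟩ := hfrac a
    exact hR.isAlgebraic_quotient_mk P hinj hb hbc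

end QuasiPrufer

attribute [local instance] FractionRing.liftAlgebra in
theorem FractionRing.isAlgebraic_of_isAlgebraic (R S : Type*) [CommRing R] [IsDomain R]
    [CommRing S] [IsDomain S] [Algebra R S] [FaithfulSMul R S] [Algebra.IsAlgebraic R S] :
    Algebra.IsAlgebraic (FractionRing R) (FractionRing S) := by
  have := (IsFractionRing.isAlgebraic_iff' R S (FractionRing S)).1 inferInstance
  exact (IsFractionRing.comap_isAlgebraic_iff (A := R) (K := FractionRing R)).1 this

/-- For an overring `T` of `D`, a prime `Q` of `T` and `q = Q ∩ D`, the
residue field `k(Q) = Frac(T/Q)` contains a copy of `k(q) = Frac(D/q)`: there is a field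
embedding `Frac(D/q) → Frac(T/Q)` compatible with the natural map `D/q → T/Q`; and if `D`
is quasi-Prüfer, this extension is algebraic. -/
theorem statement_19 (D : Type*) [CommRing D] [IsDomain D]
    (T : Subring (FractionRing D)) (hT : ∀ d : D, algebraMap D (FractionRing D) d ∈ T)
    (Q : Ideal T) [Q.IsPrime] :
    ∃ φ : FractionRing (D ⧸ Q.comap ((algebraMap D (FractionRing D)).codRestrict T hT)) →+*
        FractionRing (↥T ⧸ Q),
      (∀ a : D ⧸ Q.comap ((algebraMap D (FractionRing D)).codRestrict T hT),
        φ (algebraMap _ _ a) = algebraMap _ _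
          (Ideal.quotientMap Q ((algebraMap D (FractionRing D)).codRestrict T hT) le_rfl a)) ∧
      (IsQuasiPrufer D → ∀ x : FractionRing (↥T ⧸ Q),
        ∃ p : Polynomial
            (FractionRing (D ⧸ Q.comap ((algebraMap D (FractionRing D)).codRestrict T hT))),
          p ≠ 0 ∧ Polynomial.eval₂ φ x p = 0) := by
  let : Algebra D T := ((algebraMap D (FractionRing D)).codRestrict T hT).toAlgebra
  let := FractionRing.liftAlgebra (D ⧸ Q.comap (algebraMap D T)) (FractionRing (T ⧸ Q))
  refine ⟨algebraMap _ _, fun a => ?_, fun hD x => ?_⟩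
  · exact (IsScalarTower.algebraMap_apply (D ⧸ Q.comap (algebraMap D T))
      (FractionRing (D ⧸ Q.comap (algebraMap D T))) (FractionRing (T ⧸ Q)) a).symm
  have hinj : Function.Injective (algebraMap D T) := fun d e h =>
    IsFractionRing.injective D (FractionRing D) (congrArg Subtype.val h)
  have hfrac (t : T) : ∃ b c : D, b ≠ 0 ∧ algebraMap D T b * t = algebraMap D T c := by
    obtain ⟨⟨c, b⟩, h⟩ := IsLocalization.surj (nonZeroDivisors D) (t : FractionRing D)
    exact ⟨b, c, nonZeroDivisors.coe_ne_zero b, Subtype.ext (by rw [mul_comm]; exact h)⟩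
  have := hD.isAlgebraic_quotient_s19 Q hinj hfrac
  have := FractionRing.isAlgebraic_of_isAlgebraic (D ⧸ Q.comap (algebraMap D T)) (T ⧸ Q)
  -- `IsAlgebraic _ x` unfolds to the required `eval₂` statement, `aeval` being `eval₂ algebraMap`
  exact Algebra.IsAlgebraic.isAlgebraic x
end
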